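/- Let x ∈ D and k = k_x, and let t ∈ [−1,1]. Then x is an accumulation point of f⁻¹({t}) (i.e., x lies in the closure of f⁻¹({t}) \ {x}) if and only if f(x) − 2^{−k} ≤ t ≤ f(x) + 2^{−k}. -/

import Mathlib

open Set Topology

/-- The Cantor space `2^ℕ`, with coordinates indexed by the positive integers. -/
abbrev Cant : Type := ℕ+ → Bool

/-- The support of a point of the Cantor space, as a set of (positive) natural numbers. -/
def ksupp (x : Cant) : Set ℕ := {i | ∃ h : 0 < i, x ⟨i, h⟩ = true}

open scoped Classical in
/-- Kuratowski's function `f(x) = Σ_j (−1)^{c_x(j)} 2^{−j}`, where `c_x` enumerates the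
support of `x` in increasing order; here the summation index `j : ℕ` is the 0-based
version of the paper's 1-based position index, so the weight is `2^{−(j+1)}`. -/
noncomputable def kf (x : Cant) : ℝ :=
  ∑' j : ℕ, if (ksupp x).Infinite ∨ j < (ksupp x).ncard then
    (-1 : ℝ) ^ (Nat.nth (· ∈ ksupp x) j) * (2 : ℝ) ^ (-(j + 1 : ℤ)) else 0

/-!
If `y` agrees with `x` on all coordinates up to `max (supp x)`, the first `k` terms of `f y`
are those of `f x`, so `|f y - f x| ≤ ∑_{j > k} 2^{-j} = 2^{-k}`; since these cylinders form a
neighbourhood basis of `x`, this gives necessity. Conversely, every `s` with `|s| ≤ 2^{-k}` is a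
signed binary sum `∑ ±2^{-(k+i+1)}` (read off the ordinary binary expansion of `(1 - 2^k s) / 2`),
and appending to `supp x`, beyond any given bound, points whose parities realise these signs
produces `y ≠ x` arbitrarily close to `x` with `f y = f x + s`.
-/

theorem exists_hasSum_neg_one_pow_mul_inv_two_pow {s : ℝ} (hs : s ∈ Icc (-1 : ℝ) 1) :
    ∃ d : ℕ → Fin 2, HasSum (fun i ↦ (-1 : ℝ) ^ (d i : ℕ) * 2⁻¹ ^ (i + 1)) s := by
  obtain ⟨d, -, hd⟩ := Real.ofDigits_SurjOn one_lt_two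
    (show (1 - s) / 2 ∈ Icc (0 : ℝ) 1 by constructor <;> linarith [hs.1, hs.2])
  have hdigits : HasSum (Real.ofDigitsTerm d) ((1 - s) / 2) :=
    hd ▸ Real.summable_ofDigitsTerm.hasSum
  have hgeom : HasSum (fun i : ℕ ↦ (2⁻¹ : ℝ) ^ (i + 1)) 1 := by
    convert hasSum_geometric_two' 1 using 2 with i
    rw [pow_succ, inv_pow]; ring
  have hsum := hgeom.sub (hdigits.mul_left 2)
  rw [show 1 - 2 * ((1 - s) / 2) = s by ring] at hsum
  refine ⟨d, hsum.congr_fun fun i ↦ ?_⟩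
  simp only [Real.ofDigitsTerm, Nat.cast_ofNat, inv_pow]
  generalize d i = c
  fin_cases c <;> norm_num; ring

open scoped Classical in
theorem Nat.nth_eq_nth_of_agree {p q : ℕ → Prop} {M : ℕ} (hfin : (Set.ofPred p).Finite)
    (hpM : ∀ i, p i → i ≤ M) (hpq : ∀ i ≤ M, (p i ↔ q i)) {j : ℕ}
    (hj : j < hfin.toFinset.card) : Nat.nth q j = Nat.nth p j := by
  have hp : p (Nat.nth p j) := Nat.nth_mem_of_lt_card hfin hj
  have hle := hpM _ hp
  have hcount : Nat.count q (Nat.nth p j) = Nat.count p (Nat.nth p j) := by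
    simp only [Nat.count_eq_card_filter_range]
    congr 1
    exact Finset.filter_congr fun i hi ↦ (hpq i (by grind)).symm
  simpa [hcount, Nat.count_nth_of_lt_card_finite hfin hj] using
    Nat.nth_count ((hpq _ hle).mp hp)

open scoped Classical in
theorem Nat.nth_union_range_add_ncard {A : Set ℕ} (hA : A.Finite) {M : ℕ}
    (hAM : M ∈ upperBounds A) {f : ℕ → ℕ} (hf : StrictMono f) (hfM : ∀ n, M < f n) (n : ℕ) :
    Nat.nth (· ∈ A ∪ range f) (n + A.ncard) = f n := by
  have hcount : Nat.count (· ∈ A ∪ range f) (f n) = n + A.ncard := by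
    have hfilter : {i ∈ Finset.range (f n) | i ∈ A ∪ range f} =
        (Finset.range n).image f ∪ hA.toFinset := by
      ext i
      simp only [Finset.mem_filter, Finset.mem_range, Finset.mem_union, Finset.mem_image,
        Set.Finite.mem_toFinset, mem_union, mem_range]
      constructor
      · rintro ⟨hi, hiA | ⟨m, rfl⟩⟩
        · exact Or.inr hiA
        · exact Or.inl ⟨m, hf.lt_iff_lt.mp hi, rfl⟩
      · rintro (⟨m, hm, rfl⟩ | hiA)
        · exact ⟨hf hm, Or.inr ⟨m, rfl⟩⟩
        · exact ⟨(hAM hiA).trans_lt (hfM n), Or.inl hiA⟩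
    have hdisj : Disjoint ((Finset.range n).image f) hA.toFinset := by
      simp only [Finset.disjoint_left, Finset.mem_image, Set.Finite.mem_toFinset]
      rintro _ ⟨m, -, rfl⟩ hm
      exact (hfM m).not_ge (hAM hm)
    rw [Nat.count_eq_card_filter_range, hfilter, Finset.card_union_of_disjoint hdisj,
      Finset.card_image_of_injective _ hf.injective, Finset.card_range,
      Set.ncard_eq_toFinset_card _ hA]
  rw [← hcount]
  exact Nat.nth_count (p := (· ∈ A ∪ range f)) (Or.inr ⟨n, rfl⟩)

def cylinder {β : Type*} (x : ℕ+ → β) (M : ℕ) : Set (ℕ+ → β) :=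
  {y | ∀ i : ℕ+, (i : ℕ) ≤ M → y i = x i}

theorem cylinder_anti {β : Type*} (x : ℕ+ → β) : Antitone (cylinder x) :=
  fun _ _ hMN _ hy i hi ↦ hy i (hi.trans hMN)

theorem hasBasis_nhds_cylinder {β : Type*} [TopologicalSpace β] [DiscreteTopology β]
    (x : ℕ+ → β) : (𝓝 x).HasBasis (fun _ ↦ True) (cylinder x) := by
  rw [nhds_pi, nhds_discrete]
  refine (Filter.hasBasis_pi_pure x).to_hasBasis (fun I hI ↦ ?_) fun M _ ↦
    ⟨_, (finite_Iic M).preimage PNat.coe_injective.injOn, fun y hy i hi ↦ hy i hi⟩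
  obtain ⟨M, hM⟩ := (hI.image ((↑) : ℕ+ → ℕ)).bddAbove
  exact ⟨M, trivial, fun y hy i hi ↦ hy i (hM ⟨i, hi, rfl⟩)⟩

open scoped Classical in
noncomputable def kterm (x : Cant) (j : ℕ) : ℝ :=
  if (ksupp x).Infinite ∨ j < (ksupp x).ncard then
    (-1 : ℝ) ^ Nat.nth (· ∈ ksupp x) j * 2⁻¹ ^ (j + 1) else 0

theorem kf_eq_tsum_kterm (x : Cant) : kf x = ∑' j, kterm x j := by
  simp only [kf, kterm, zpow_neg, ← zpow_natCast, inv_zpow, Nat.cast_add, Nat.cast_one]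

theorem abs_kterm_le (x : Cant) (j : ℕ) : |kterm x j| ≤ 2⁻¹ ^ (j + 1) := by
  unfold kterm
  split
  · simp
  · simp only [abs_zero]; positivity

theorem summable_kterm (x : Cant) : Summable (kterm x) :=
  .of_norm_bounded (summable_geometric_two.mul_right 2⁻¹) fun j ↦ by
    simpa [pow_succ] using abs_kterm_le x j

theorem kterm_of_infinite {x : Cant} (hx : (ksupp x).Infinite) (j : ℕ) :
    kterm x j = (-1 : ℝ) ^ Nat.nth (· ∈ ksupp x) j * 2⁻¹ ^ (j + 1) := by
  simp [kterm, hx]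

theorem kterm_eq_zero_of_ncard_le {x : Cant} (hx : (ksupp x).Finite) {j : ℕ}
    (hj : (ksupp x).ncard ≤ j) : kterm x j = 0 := by
  simp [kterm, hx, hj]

theorem kterm_eq_of_ksupp_agree {x y : Cant} (hx : (ksupp x).Finite) {M : ℕ}
    (hM : M ∈ upperBounds (ksupp x)) (hxy : ∀ i ≤ M, (i ∈ ksupp x ↔ i ∈ ksupp y)) {j : ℕ}
    (hj : j < (ksupp x).ncard) : kterm y j = kterm x j := by
  have hxy_sub : ksupp x ⊆ ksupp y := fun i hi ↦ (hxy i (hM hi)).mp hi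
  have hy : (ksupp y).Infinite ∨ j < (ksupp y).ncard := by
    by_cases hfy : (ksupp y).Finite
    · exact .inr (hj.trans_le (Set.ncard_le_ncard hxy_sub hfy))
    · exact .inl hfy
  have hnth : Nat.nth (· ∈ ksupp y) j = Nat.nth (· ∈ ksupp x) j :=
    Nat.nth_eq_nth_of_agree hx (fun i hi ↦ hM hi) hxy
      (by rwa [Set.ncard_eq_toFinset_card _ hx] at hj)
  simp only [kterm, if_pos hy, if_pos (Or.inr hj), hnth]

theorem abs_tsum_kterm_add_le (x : Cant) (k : ℕ) : |∑' i, kterm x (i + k)| ≤ 2⁻¹ ^ k := by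
  have hgeom : HasSum (fun i : ℕ ↦ (2⁻¹ : ℝ) ^ (i + k + 1)) (2⁻¹ ^ k) :=
    (hasSum_geometric_two' (2⁻¹ ^ k)).congr_fun fun i ↦ by
      rw [pow_add, pow_add, inv_pow 2 i]; ring
  simpa only [Real.norm_eq_abs] using
    tsum_of_norm_bounded (f := fun i ↦ kterm x (i + k)) hgeom fun i ↦
      (Real.norm_eq_abs _).trans_le (abs_kterm_le x (i + k))

theorem coe_mem_ksupp {x : Cant} {i : ℕ+} : (i : ℕ) ∈ ksupp x ↔ x i = true :=
  ⟨fun ⟨_, h⟩ ↦ h, fun h ↦ ⟨i.pos, h⟩⟩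

theorem mem_cylinder_iff_ksupp {x y : Cant} {M : ℕ} :
    y ∈ cylinder x M ↔ ∀ i ≤ M, (i ∈ ksupp x ↔ i ∈ ksupp y) := by
  refine ⟨fun hy i hi ↦ ?_, fun hxy i hi ↦ ?_⟩
  · rcases Nat.eq_zero_or_pos i with rfl | hpos
    · simp [ksupp]
    · lift i to ℕ+ using hpos
      rw [coe_mem_ksupp, coe_mem_ksupp, hy i hi]
  · rw [Bool.eq_iff_iff, ← coe_mem_ksupp, ← coe_mem_ksupp]
    exact (hxy i hi).symm

open scoped Classical in
theorem exists_ksupp_eq {S : Set ℕ} (hS : 0 ∉ S) : ∃ y : Cant, ksupp y = S :=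
  ⟨fun i ↦ decide ((i : ℕ) ∈ S), Set.ext fun _ ↦ ⟨fun ⟨_, h⟩ ↦ of_decide_eq_true h,
    fun h ↦ ⟨Nat.pos_of_ne_zero (ne_of_mem_of_not_mem h hS), decide_eq_true h⟩⟩⟩

theorem kf_eq_add_tsum_kterm_of_mem_cylinder {x y : Cant} (hx : (ksupp x).Finite) {M : ℕ}
    (hM : M ∈ upperBounds (ksupp x)) (hy : y ∈ cylinder x M) :
    kf y = kf x + ∑' i, kterm y (i + (ksupp x).ncard) := by
  have hxy := mem_cylinder_iff_ksupp.mp hy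
  have hkfx : kf x = ∑ j ∈ Finset.range (ksupp x).ncard, kterm x j := by
    rw [kf_eq_tsum_kterm]
    exact tsum_eq_sum fun j hj ↦
      kterm_eq_zero_of_ncard_le hx (not_lt.mp (Finset.mem_range.not.mp hj))
  rw [kf_eq_tsum_kterm, ← (summable_kterm y).sum_add_tsum_nat_add (ksupp x).ncard, hkfx,
    Finset.sum_congr rfl fun j hj ↦ kterm_eq_of_ksupp_agree hx hM hxy (Finset.mem_range.mp hj)]

theorem abs_kf_sub_le_of_mem_cylinder {x y : Cant} (hx : (ksupp x).Finite) {M : ℕ}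
    (hM : M ∈ upperBounds (ksupp x)) (hy : y ∈ cylinder x M) :
    |kf y - kf x| ≤ 2⁻¹ ^ (ksupp x).ncard := by
  rw [kf_eq_add_tsum_kterm_of_mem_cylinder hx hM hy, add_sub_cancel_left]
  exact abs_tsum_kterm_add_le y _

theorem exists_mem_cylinder_ne_kf_eq {x : Cant} (hx : (ksupp x).Finite) {M : ℕ}
    (hM : M ∈ upperBounds (ksupp x)) {t : ℝ} (ht : |t - kf x| ≤ 2⁻¹ ^ (ksupp x).ncard) :
    ∃ y ∈ cylinder x M, y ≠ x ∧ kf y = t := by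
  set k := (ksupp x).ncard
  obtain ⟨d, hd⟩ := exists_hasSum_neg_one_pow_mul_inv_two_pow (s := 2 ^ k * (t - kf x)) <| by
    rw [mem_Icc, ← abs_le, abs_mul, abs_of_pos (by positivity)]
    calc 2 ^ k * |t - kf x| ≤ 2 ^ k * 2⁻¹ ^ k := by gcongr
      _ = 1 := by rw [← mul_pow, mul_inv_cancel₀ two_ne_zero, one_pow]
  -- the digit `d i` is recorded in the parity of the `(k + i)`-th element of the support
  set pos : ℕ → ℕ := fun i ↦ 2 * (M + i + 1) + d i
  have hpos_mono : StrictMono pos := strictMono_nat_of_lt_succ fun i ↦ by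
    have := (d i).isLt; simp only [pos]; omega
  have hpos_gt (i : ℕ) : M < pos i := by simp only [pos]; omega
  have hzero : 0 ∉ ksupp x ∪ range pos := by
    rintro (⟨h, -⟩ | ⟨i, hi⟩)
    exacts [h.false, by simp only [pos] at hi; omega]
  obtain ⟨y, hy⟩ := exists_ksupp_eq hzero
  have hyM : y ∈ cylinder x M := mem_cylinder_iff_ksupp.mpr fun i hi ↦ by
    rw [hy, mem_union, or_iff_left]
    rintro ⟨j, rfl⟩
    exact (hpos_gt j).not_ge hi
  have hinf : (ksupp y).Infinite :=
    hy ▸ (infinite_range_of_injective hpos_mono.injective).mono subset_union_right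
  have htail (i : ℕ) :
      kterm y (i + k) = 2⁻¹ ^ k * ((-1 : ℝ) ^ (d i : ℕ) * 2⁻¹ ^ (i + 1)) := by
    rw [kterm_of_infinite hinf, hy, Nat.nth_union_range_add_ncard hx hM hpos_mono hpos_gt,
      pow_add, pow_mul, neg_one_sq, one_pow, one_mul]
    ring
  refine ⟨y, hyM, fun h ↦ hinf (h ▸ hx), ?_⟩
  rw [kf_eq_add_tsum_kterm_of_mem_cylinder hx hM hyM, tsum_congr htail, (hd.mul_left _).tsum_eq,
    ← mul_assoc, ← mul_pow, inv_mul_cancel₀ two_ne_zero, one_pow, one_mul, add_sub_cancel]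

theorem kf_accumulation_iff_general (x : Cant) (hx : (ksupp x).Finite) (t : ℝ) :
    x ∈ closure ((kf ⁻¹' {t}) \ {x}) ↔
      kf x - (2 : ℝ) ^ (-((ksupp x).ncard : ℤ)) ≤ t ∧
        t ≤ kf x + (2 : ℝ) ^ (-((ksupp x).ncard : ℤ)) := by
  obtain ⟨M₀, hM₀⟩ := hx.bddAbove
  rw [mem_closure_iff_nhds_basis (hasBasis_nhds_cylinder x), zpow_neg, zpow_natCast, ← inv_pow,
    ← sub_le_iff_le_add', sub_le_comm, ← abs_sub_le_iff, abs_sub_comm]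
  constructor
  · intro h
    obtain ⟨y, ⟨hyt, -⟩, hy⟩ := h M₀ trivial
    rw [← (hyt : kf y = t)]
    exact abs_kf_sub_le_of_mem_cylinder hx hM₀ hy
  · intro ht M _
    obtain ⟨y, hy, hyx, hyt⟩ := exists_mem_cylinder_ne_kf_eq hx
      (upperBounds_mono_mem (le_max_right M M₀) hM₀) ht
    exact ⟨y, ⟨hyt, hyx⟩, cylinder_anti x (le_max_left M M₀) hy⟩

/-- Let `x ∈ D` with `k = k_x = |supp x|` and `t ∈ [−1,1]`.  Then `x` is an accumulation
point of `f⁻¹({t})` if and only if `f(x) − 2^{−k} ≤ t ≤ f(x) + 2^{−k}`. -/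
theorem kf_accumulation_iff (x : Cant) (hx : (ksupp x).Finite) (t : ℝ)
    (ht : t ∈ Icc (-1 : ℝ) 1) :
    x ∈ closure ((kf ⁻¹' {t}) \ {x}) ↔
      kf x - (2 : ℝ) ^ (-((ksupp x).ncard : ℤ)) ≤ t ∧
        t ≤ kf x + (2 : ℝ) ^ (-((ksupp x).ncard : ℤ)) :=
  kf_accumulation_iff_general x hx t
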